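/- arXiv:2501.19313 — 3 statements merged into one kernel-verified Lean document; each statement's English description precedes it below -/
import Mathlib

section
/- Let P(Z) = (Z₀⁴ + Z₂⁴)Z₂ + (Z₀²Z₁² + Z₃⁴)Z₃ + (Z₁⁴ + Z₄⁴)Z₄, a homogeneous quintic on ℂ⁵. Then (i) P vanishes identically on the plane {Z₂ = Z₃ = Z₄ = 0}, so the line C = {Z₂ = Z₃ = Z₄ = 0} ⊂ ℙ⁴ lies on X = {P = 0}; and (ii) there is no z ∈ ℂ⁵ \ {0} with P(z) = 0 and all partial derivatives ∂P/∂Zᵢ(z) = 0. Hence X is a smooth quintic threefold containing the rational curve C. -/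
/-!
The last three partial derivatives have the shape `u + 5 v⁴`. If `z₀ z₁ = 0`, they and
`∂₀P, ∂₁P` force the coordinates to vanish one after another. If `z₀ z₁ ≠ 0`, then
`∂₀P = ∂₁P = 0` read `2 z₀² z₂ = -z₁² z₃` and `z₀² z₃ = -2 z₁² z₄`; raising them to the fourth
power and eliminating `z₂⁴, z₃⁴, z₄⁴` gives `16 z₀¹⁰ = z₁¹⁰` and `z₀¹⁰ = 16 z₁¹⁰`, whence
`255 z₀¹⁰ = 0`.
-/

open Function

def katzQuintic {R : Type*} [CommRing R] (z : Fin 5 → R) : R :=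
  (z 0 ^ 4 + z 2 ^ 4) * z 2 + (z 0 ^ 2 * z 1 ^ 2 + z 3 ^ 4) * z 3 + (z 1 ^ 4 + z 4 ^ 4) * z 4

def katzGradient {R : Type*} [CommRing R] (z : Fin 5 → R) : Fin 5 → R :=
  ![4 * z 0 ^ 3 * z 2 + 2 * z 0 * z 1 ^ 2 * z 3,
    2 * z 0 ^ 2 * z 1 * z 3 + 4 * z 1 ^ 3 * z 4,
    z 0 ^ 4 + 5 * z 2 ^ 4,
    z 0 ^ 2 * z 1 ^ 2 + 5 * z 3 ^ 4,
    z 1 ^ 4 + 5 * z 4 ^ 4]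

theorem deriv_katzQuintic_update {𝕜 : Type*} [NontriviallyNormedField 𝕜] (z : Fin 5 → 𝕜)
    (i : Fin 5) : deriv (fun w => katzQuintic (update z i w)) (z i) = katzGradient z i := by
  fin_cases i <;>
    simp (disch := fun_prop) [katzQuintic, katzGradient, update, -mul_eq_mul_left_iff,
      -mul_eq_mul_right_iff] <;> ring

section Critical

variable {K : Type*} [Field K] [CharZero K] {a b c d e : K}

theorem katz_critical_fst_eq_zero (h0 : 4 * a ^ 3 * c + 2 * a * b ^ 2 * d = 0)
    (h1 : 2 * a ^ 2 * b * d + 4 * b ^ 3 * e = 0) (h2 : a ^ 4 + 5 * c ^ 4 = 0)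
    (h3 : a ^ 2 * b ^ 2 + 5 * d ^ 4 = 0) (h4 : b ^ 4 + 5 * e ^ 4 = 0) : a = 0 := by
  by_contra ha
  by_cases hb : b = 0
  · grind
  have hc : 2 * a ^ 2 * c = -(b ^ 2 * d) :=
    mul_left_cancel₀ (mul_ne_zero two_ne_zero ha) (by linear_combination h0)
  have hd : a ^ 2 * d = -(2 * b ^ 2 * e) :=
    mul_left_cancel₀ (mul_ne_zero two_ne_zero hb) (by linear_combination h1)
  have hab : 16 * a ^ 10 = b ^ 10 := mul_left_cancel₀ (pow_ne_zero 2 ha) <| by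
    linear_combination (-5) * congrArg (· ^ 4) hc + 16 * a ^ 8 * h2 - b ^ 8 * h3
  have hba : a ^ 10 = 16 * b ^ 10 := mul_left_cancel₀ (pow_ne_zero 2 hb) <| by
    linear_combination (-5) * congrArg (· ^ 4) hd + a ^ 8 * h3 - 16 * b ^ 8 * h4
  exact ha <| pow_eq_zero_iff (n := 10) (by norm_num) |>.mp <| by
    linear_combination (16 * hab - hba) / 255

theorem katz_critical_eq_zero (h0 : 4 * a ^ 3 * c + 2 * a * b ^ 2 * d = 0)
    (h1 : 2 * a ^ 2 * b * d + 4 * b ^ 3 * e = 0) (h2 : a ^ 4 + 5 * c ^ 4 = 0)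
    (h3 : a ^ 2 * b ^ 2 + 5 * d ^ 4 = 0) (h4 : b ^ 4 + 5 * e ^ 4 = 0) :
    a = 0 ∧ b = 0 ∧ c = 0 ∧ d = 0 ∧ e = 0 := by
  have ha := katz_critical_fst_eq_zero h0 h1 h2 h3 h4
  grind

theorem eq_zero_of_katzGradient_eq_zero {z : Fin 5 → K} (h : katzGradient z = 0) : z = 0 := by
  have h0 := congrFun h 0
  have h1 := congrFun h 1
  have h2 := congrFun h 2
  have h3 := congrFun h 3
  have h4 := congrFun h 4
  simp only [katzGradient, Fin.isValue, Matrix.cons_val, Pi.zero_apply] at h0 h1 h2 h3 h4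
  obtain ⟨_, _, _, _, _⟩ := katz_critical_eq_zero h0 h1 h2 h3 h4
  ext i
  fin_cases i <;> assumption

end Critical

/-- Katz's quintic `P(Z) = (Z₀⁴ + Z₂⁴)Z₂ + (Z₀²Z₁² + Z₃⁴)Z₃ + (Z₁⁴ + Z₄⁴)Z₄`:
(i) `P` vanishes identically on the plane `{Z₂ = Z₃ = Z₄ = 0}`, so the line
`C = {Z₂ = Z₃ = Z₄ = 0} ⊂ ℙ⁴` lies on `X = {P = 0}`; and (ii) there is no
nonzero `z ∈ ℂ⁵` with `P(z) = 0` and all partial derivatives vanishing.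
Hence `X` is a smooth quintic threefold containing the rational curve `C`. -/
theorem katz_quintic_smooth_contains_line
    (P : (Fin 5 → ℂ) → ℂ)
    (hP : ∀ z, P z = (z 0 ^ 4 + z 2 ^ 4) * z 2 + (z 0 ^ 2 * z 1 ^ 2 + z 3 ^ 4) * z 3
        + (z 1 ^ 4 + z 4 ^ 4) * z 4) :
    (∀ z : Fin 5 → ℂ, z 2 = 0 → z 3 = 0 → z 4 = 0 → P z = 0) ∧
    ¬ ∃ z : Fin 5 → ℂ, z ≠ 0 ∧ P z = 0 ∧
      ∀ i : Fin 5, deriv (fun w : ℂ => P (Function.update z i w)) (z i) = 0 := by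
  refine ⟨fun z h2 h3 h4 => by rw [hP, h2, h3, h4]; ring, ?_⟩
  rintro ⟨z, hz, -, hcrit⟩
  obtain rfl : P = katzQuintic := funext hP
  exact hz <| eq_zero_of_katzGradient_eq_zero <| funext fun i =>
    (deriv_katzQuintic_update z i).symm.trans (hcrit i)
end

section
/- Let G = Z₃⁴ + Z₂⁴ − Z₀⁴, H = −Z₄⁴ − Z₁⁴ − Z₀⁴, and P = Z₃G + Z₄H, a homogeneous quintic on ℂ⁵. A nonzero point z ∈ ℂ⁵ satisfies P(z) = 0 and ∂P/∂Zᵢ(z) = 0 for all i = 0,…,4 if and only if z₃ = z₄ = 0, z₂⁴ = z₀⁴ and z₁⁴ = −z₀⁴; for any such point necessarily z₀ ≠ 0. In particular the singular points of X₀ = {P = 0} ⊂ ℙ⁴ are exactly the 16 points [1 : ζ₁ : ζ₂ : 0 : 0] with ζ₁⁴ = −1 and ζ₂⁴ = 1, i.e. the set of solutions normalized by z₀ = 1 has exactly 16 elements. -/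
/-!
The partial derivatives of `P` are `-4(z₃+z₄)z₀³`, `-4z₄z₁³`, `4z₃z₂³`, `5z₃⁴+z₂⁴-z₀⁴` and
`-5z₄⁴-z₁⁴-z₀⁴`. Multiplying the last two by `z₃` and `z₄` and using the middle two gives
`5z₃⁵ = z₃z₀⁴` and `5z₄⁵ = -z₄z₀⁴`, hence `z₃⁵ = z₄⁵` by the first. Now either `z₄ = -z₃`,
so `2z₃⁵ = 0`, or `z₀ = 0`, so `5z₃⁵ = 0`; either way `z₃ = z₄ = 0`, and then `P = 0` and the
remaining equations say `z₂⁴ = z₀⁴`, `z₁⁴ = -z₀⁴`. With `z₀ = 1` this leaves four choices of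
`z₁` and four of `z₂`.
-/

open Function

def cghQuintic {R : Type*} [CommRing R] (z : Fin 5 → R) : R :=
  z 3 * (z 3 ^ 4 + z 2 ^ 4 - z 0 ^ 4) + z 4 * (-(z 4 ^ 4) - z 1 ^ 4 - z 0 ^ 4)

def cghGradient {R : Type*} [CommRing R] (z : Fin 5 → R) : Fin 5 → R :=
  ![-4 * (z 3 + z 4) * z 0 ^ 3, -4 * z 4 * z 1 ^ 3, 4 * z 3 * z 2 ^ 3,
    5 * z 3 ^ 4 + z 2 ^ 4 - z 0 ^ 4, -(5 * z 4 ^ 4) - z 1 ^ 4 - z 0 ^ 4]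

section Deriv

variable {𝕜 : Type*} [NontriviallyNormedField 𝕜]

theorem hasDerivAt_of_eq_quintic_trinomial {f : 𝕜 → 𝕜} {f' x : 𝕜} (a b c d : 𝕜)
    (hf : ∀ w, f w = a * w ^ 5 + b * w ^ 4 + c * w + d)
    (hf' : f' = 5 * a * x ^ 4 + 4 * b * x ^ 3 + c) : HasDerivAt f f' x := by
  rw [funext hf, hf']
  refine ((((hasDerivAt_pow 5 x).const_mul a).add ((hasDerivAt_pow 4 x).const_mul b)).add
    ((hasDerivAt_id x).const_mul c)).add_const d |>.congr_deriv ?_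
  push_cast
  ring

theorem hasDerivAt_cghQuintic_update (z : Fin 5 → 𝕜) (i : Fin 5) :
    HasDerivAt (fun w => cghQuintic (update z i w)) (cghGradient z i) (z i) := by
  fin_cases i
  · exact hasDerivAt_of_eq_quintic_trinomial 0 (-(z 3 + z 4)) 0
      (z 3 * (z 3 ^ 4 + z 2 ^ 4) + z 4 * (-(z 4 ^ 4) - z 1 ^ 4))
      (fun w => by simp [cghQuintic]; ring) (by simp [cghGradient]; ring)
  · exact hasDerivAt_of_eq_quintic_trinomial 0 (-z 4) 0
      (z 3 * (z 3 ^ 4 + z 2 ^ 4 - z 0 ^ 4) + z 4 * (-(z 4 ^ 4) - z 0 ^ 4))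
      (fun w => by simp [cghQuintic]; ring) (by simp [cghGradient])
  · exact hasDerivAt_of_eq_quintic_trinomial 0 (z 3) 0
      (z 3 * (z 3 ^ 4 - z 0 ^ 4) + z 4 * (-(z 4 ^ 4) - z 1 ^ 4 - z 0 ^ 4))
      (fun w => by simp [cghQuintic]; ring) (by simp [cghGradient])
  · exact hasDerivAt_of_eq_quintic_trinomial 1 0 (z 2 ^ 4 - z 0 ^ 4)
      (z 4 * (-(z 4 ^ 4) - z 1 ^ 4 - z 0 ^ 4))
      (fun w => by simp [cghQuintic]; ring) (by simp [cghGradient]; ring)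
  · exact hasDerivAt_of_eq_quintic_trinomial (-1) 0 (-(z 1 ^ 4) - z 0 ^ 4)
      (z 3 * (z 3 ^ 4 + z 2 ^ 4 - z 0 ^ 4))
      (fun w => by simp [cghQuintic]; ring) (by simp [cghGradient]; ring)

end Deriv

theorem cghGradient_eq_zero_iff {K : Type*} [Field K] [CharZero K] (z : Fin 5 → K) :
    (∀ i, cghGradient z i = 0) ↔
      z 3 = 0 ∧ z 4 = 0 ∧ z 2 ^ 4 = z 0 ^ 4 ∧ z 1 ^ 4 = -(z 0 ^ 4) := by
  constructor
  · intro h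
    have e0 : (z 3 + z 4) * z 0 ^ 3 = 0 := by simpa [cghGradient] using h 0
    have e1 : z 4 * z 1 ^ 3 = 0 := by simpa [cghGradient] using h 1
    have e2 : z 3 * z 2 ^ 3 = 0 := by simpa [cghGradient] using h 2
    have e3 : 5 * z 3 ^ 4 + z 2 ^ 4 - z 0 ^ 4 = 0 := h 3
    have e4 : -(5 * z 4 ^ 4) - z 1 ^ 4 - z 0 ^ 4 = 0 := h 4
    have h3 : 5 * z 3 ^ 5 = z 3 * z 0 ^ 4 := by linear_combination z 3 * e3 - z 2 * e2
    have h34 : z 3 ^ 5 = z 4 ^ 5 := by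
      linear_combination (h3 + z 4 * e4 + z 1 * e1 + z 0 * e0) / 5
    have hz34 : z 3 = 0 ∧ z 4 = 0 := by
      rcases mul_eq_zero.1 e0 with hs | h0
      · have : 2 * z 3 ^ 5 = 0 := by linear_combination h34 + (z 4 ^ 4 - z 4 ^ 3 * z 3
          + z 4 ^ 2 * z 3 ^ 2 - z 4 * z 3 ^ 3 + z 3 ^ 4) * hs
        have h3 : z 3 = 0 := by simpa using this
        exact ⟨h3, by linear_combination hs - h3⟩
      · have h0 : z 0 = 0 := pow_eq_zero_iff (by norm_num) |>.1 h0
        have h3 : z 3 = 0 := by simpa [h0] using h3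
        exact ⟨h3, by simpa [h3] using h34.symm⟩
    obtain ⟨h3, h4⟩ := hz34
    exact ⟨h3, h4, by linear_combination e3 - 5 * z 3 ^ 3 * h3,
      by linear_combination -e4 - 5 * z 4 ^ 3 * h4⟩
  · rintro ⟨h3, h4, h2, h1⟩ i
    fin_cases i <;> simp [cghGradient, h3, h4, h2, h1]

theorem cghQuintic_eq_zero_and_cghGradient_eq_zero_iff {K : Type*} [Field K] [CharZero K]
    (z : Fin 5 → K) :
    (cghQuintic z = 0 ∧ ∀ i, cghGradient z i = 0) ↔
      z 3 = 0 ∧ z 4 = 0 ∧ z 2 ^ 4 = z 0 ^ 4 ∧ z 1 ^ 4 = -(z 0 ^ 4) :=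
  ⟨fun h => (cghGradient_eq_zero_iff z).1 h.2, fun h =>
    ⟨by simp [cghQuintic, h.1, h.2.1], (cghGradient_eq_zero_iff z).2 h⟩⟩

theorem ncard_setOf_pow_eq {n : ℕ} (hn : n ≠ 0) {a : ℂ} (ha : a ≠ 0) :
    {x : ℂ | x ^ n = a}.ncard = n := by
  have hζ := Complex.isPrimitiveRoot_exp n hn
  have hroots : {x : ℂ | x ^ n = a} = ↑(Polynomial.nthRootsFinset n a) := by
    ext x
    simp [Polynomial.mem_nthRootsFinset (Nat.pos_of_ne_zero hn)]
  classical
  rw [hroots, Set.ncard_coe_finset, Polynomial.nthRootsFinset,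
    Multiset.toFinset_card_of_nodup (hζ.nthRoots_nodup ha), hζ.card_nthRoots,
    if_pos (IsAlgClosed.exists_pow_nat_eq a (Nat.pos_of_ne_zero hn))]

theorem ncard_cgh_nodes_normalized :
    {z : Fin 5 → ℂ | z 0 = 1 ∧ z 3 = 0 ∧ z 4 = 0 ∧ z 2 ^ 4 = 1 ∧ z 1 ^ 4 = -1}.ncard = 16 := by
  let node : ℂ × ℂ → Fin 5 → ℂ := fun p => ![1, p.1, p.2, 0, 0]
  have hnode : Function.Injective node := fun p q h =>
    Prod.ext (by simpa [node] using congrFun h 1) (by simpa [node] using congrFun h 2)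
  have himage : {z : Fin 5 → ℂ | z 0 = 1 ∧ z 3 = 0 ∧ z 4 = 0 ∧ z 2 ^ 4 = 1 ∧ z 1 ^ 4 = -1}
      = node '' ({x | x ^ 4 = -1} ×ˢ {x | x ^ 4 = 1}) := by
    ext z
    constructor
    · rintro ⟨h0, h3, h4, h2, h1⟩
      refine ⟨(z 1, z 2), ⟨h1, h2⟩, ?_⟩
      funext i
      fin_cases i <;> simp [node, h0, h3, h4]
    · rintro ⟨p, ⟨h1, h2⟩, rfl⟩
      exact ⟨rfl, rfl, rfl, h2, h1⟩
  rw [himage, Set.ncard_image_of_injective _ hnode, Set.ncard_prod,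
    ncard_setOf_pow_eq four_ne_zero (neg_ne_zero.2 one_ne_zero),
    ncard_setOf_pow_eq four_ne_zero one_ne_zero]

/-- The Candelas–Green–Hübsch singular quintic `P = Z₃G + Z₄H` with
`G = Z₃⁴ + Z₂⁴ − Z₀⁴`, `H = −Z₄⁴ − Z₁⁴ − Z₀⁴`: a nonzero `z ∈ ℂ⁵` satisfies
`P(z) = 0` and `DP(z) = 0` iff `z₃ = z₄ = 0`, `z₂⁴ = z₀⁴` and `z₁⁴ = −z₀⁴`;
any such point has `z₀ ≠ 0`; and the set of solutions normalized by `z₀ = 1`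
has exactly 16 elements (the 16 ordinary double points of `X₀ ⊂ ℙ⁴`). -/
theorem cgh_quintic_sixteen_nodes
    (P : (Fin 5 → ℂ) → ℂ)
    (hP : ∀ z, P z = z 3 * (z 3 ^ 4 + z 2 ^ 4 - z 0 ^ 4)
        + z 4 * (-(z 4 ^ 4) - z 1 ^ 4 - z 0 ^ 4)) :
    (∀ z : Fin 5 → ℂ, z ≠ 0 →
      ((P z = 0 ∧
          ∀ i : Fin 5, deriv (fun w : ℂ => P (Function.update z i w)) (z i) = 0) ↔
        (z 3 = 0 ∧ z 4 = 0 ∧ z 2 ^ 4 = z 0 ^ 4 ∧ z 1 ^ 4 = -(z 0 ^ 4)))) ∧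
    (∀ z : Fin 5 → ℂ, z ≠ 0 →
      z 3 = 0 → z 4 = 0 → z 2 ^ 4 = z 0 ^ 4 → z 1 ^ 4 = -(z 0 ^ 4) → z 0 ≠ 0) ∧
    Set.ncard {z : Fin 5 → ℂ | z 0 = 1 ∧ z 3 = 0 ∧ z 4 = 0 ∧
        z 2 ^ 4 = 1 ∧ z 1 ^ 4 = -1} = 16 := by
  obtain rfl : P = cghQuintic := funext hP
  refine ⟨fun z _ => ?_, fun z hz h3 h4 h2 h1 h0 => hz ?_, ncard_cgh_nodes_normalized⟩
  · simp only [fun i => (hasDerivAt_cghQuintic_update z i).deriv]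
    exact cghQuintic_eq_zero_and_cghGradient_eq_zero_iff z
  · have h2 : z 2 = 0 := by simpa [h0] using h2
    have h1 : z 1 = 0 := by simpa [h0] using h1
    funext i
    fin_cases i <;> assumption
end

section
/- Let M(x) = [[−x, −x³], [x⁻¹, 0]] for x ∈ ℂ \ {0}. There exist 2×2 matrices A(x̃), with entries polynomial in x̃ and constant nonzero determinant (so A(x̃) ∈ GL₂(ℂ) for every x̃ ∈ ℂ), and B(x), with entries polynomial in x and constant nonzero determinant, such that for all x ∈ ℂ \ {0}: diag(x, x) = A(1/x) · M(x) · B(x)⁻¹. Explicitly one may take A(x̃) = [[1, 0], [x̃², 1]] and B(x) = [[−1, −x²], [0, −1]]. Hence the rank-2 holomorphic bundle on ℙ¹ with transition matrix M(x) is isomorphic to the bundle with transition matrix diag(x,x), namely O(−1) ⊕ O(−1). -/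
open Matrix

/-!
Subtracting `x⁻²` times the first row of `M(x)` from the second clears its `x⁻¹` entry, and the
result is exactly `x • B(x)`; that is, `A(1/x) · M(x) = x • B(x)`. Since `det B = 1`, multiplying
by `B(x)⁻¹` leaves `x • 1 = diag(x, x)`.
-/

theorem det_lowerUnitriangular_fin_two {R : Type*} [CommRing R] (c : R) :
    (!![1, 0; c, 1] : Matrix (Fin 2) (Fin 2) R).det = 1 := by
  simp [det_fin_two_of]

theorem det_neg_upperUnitriangular_fin_two {R : Type*} [CommRing R] (c : R) :
    (!![-1, c; 0, -1] : Matrix (Fin 2) (Fin 2) R).det = 1 := by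
  simp [det_fin_two_of]

theorem smul_one_fin_two {R : Type*} [CommRing R] (x : R) :
    x • (1 : Matrix (Fin 2) (Fin 2) R) = !![x, 0; 0, x] := by
  rw [one_fin_two, smul_of]; simp

theorem mul_nonsing_inv_eq_smul_one {n R : Type*} [Fintype n] [DecidableEq n] [CommRing R]
    {P Q : Matrix n n R} (x : R) (hQ : IsUnit Q.det) (h : P = x • Q) :
    P * Q⁻¹ = x • 1 := by
  rw [h, smul_mul, mul_nonsing_inv Q hQ]

theorem katz_transition_mul_eq_smul {K : Type*} [Field K] {x : K} (hx : x ≠ 0) :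
    !![1, 0; (1 / x) ^ 2, 1] * !![-x, -(x ^ 3); x⁻¹, 0] = x • !![-1, -(x ^ 2); 0, -1] := by
  ext i j
  fin_cases i <;> fin_cases j <;> simp [mul_apply, Fin.sum_univ_two]
  all_goals field_simp
  ring

/-- The transition matrix `M(x) = [[−x, −x³], [x⁻¹, 0]]` of the normal bundle of
Katz's line is equivalent to `diag(x, x)`: with `A(xt) = [[1, 0], [xt², 1]]` and
`B(x) = [[−1, −x²], [0, −1]]` (entries polynomial, constant determinant `1`, hence
invertible everywhere), one has `diag(x,x) = A(1/x)·M(x)·B(x)⁻¹` for all `x ≠ 0`.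
Hence the bundle with transition matrix `M` is `O(−1) ⊕ O(−1)` over `ℙ¹`. -/
theorem normal_bundle_transition_is_O_neg1_plus_O_neg1
    (M A B : ℂ → Matrix (Fin 2) (Fin 2) ℂ)
    (hM : ∀ x, M x = !![-x, -(x ^ 3); x⁻¹, 0])
    (hA : ∀ xt, A xt = !![1, 0; xt ^ 2, 1])
    (hB : ∀ x, B x = !![-1, -(x ^ 2); 0, -1]) :
    (∀ xt : ℂ, (A xt).det = 1) ∧
    (∀ x : ℂ, (B x).det = 1) ∧
    (∀ x : ℂ, x ≠ 0 →
      !![x, 0; 0, x] = A (1 / x) * M x * (B x)⁻¹) := by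
  have hAdet (xt : ℂ) : (A xt).det = 1 := by rw [hA]; exact det_lowerUnitriangular_fin_two _
  have hBdet (x : ℂ) : (B x).det = 1 := by rw [hB]; exact det_neg_upperUnitriangular_fin_two _
  refine ⟨hAdet, hBdet, fun x hx => ?_⟩
  have hAM : A (1 / x) * M x = x • B x := by rw [hA, hM, hB]; exact katz_transition_mul_eq_smul hx
  rw [mul_nonsing_inv_eq_smul_one x (by simp [hBdet]) hAM, smul_one_fin_two]
end
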